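/- For a measure-preserving stochastic map f : (X,p) → (Y,q) between finite probability spaces, the conditional information loss K(f) vanishes if and only if there exists a measure-preserving stochastic map g : (Y,q) → (X,p) such that (g∘f)_{x'x} = δ_{x'x} for all x with p_x > 0 (i.e., f is a disintegration of g). -/

import Mathlib

open Real BigOperators
open scoped Classical

noncomputable def entropy {X : Type*} [Fintype X] (p : X → ℝ) : ℝ :=
  ∑ x, Real.negMulLog (p x)

def IsDist {X : Type*} [Fintype X] (p : X → ℝ) : Prop :=
  (∀ x, 0 ≤ p x) ∧ ∑ x, p x = 1

/-!
Write `a y x = f x y * p x` for the joint distribution and `η = negMulLog`. The chain rule for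
entropy gives `K(f) = ∑ y, (∑ x, η (a y x) - η (q y))`, and each summand equals
`∑ x, a y x * (log (q y) - log (a y x)) ≥ 0`, which vanishes exactly when at most one `x` has
`a y x ≠ 0`. In that case the Bayesian inverse `g y x = a y x / q y` is the point mass at that
`x` and inverts `f` on the support of `p`. Conversely, if `g ∘ f` is the identity on the support
of `p`, then `g y x = 1` whenever `a y x ≠ 0`, which the distribution `g y` allows for at most
one `x`.
-/

open Finset Function

section NegMulLog

variable {ι : Type*} [Fintype ι]

lemma sum_negMulLog_sub_negMulLog_sum (a : ι → ℝ) :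
    ∑ i, negMulLog (a i) - negMulLog (∑ i, a i) =
      ∑ i, a i * (log (∑ j, a j) - log (a i)) := by
  simp only [negMulLog, mul_sub, sum_sub_distrib, ← sum_mul, neg_mul, sum_neg_distrib]
  ring

lemma mul_log_sub_log_nonneg {a s : ℝ} (ha : 0 ≤ a) (has : a ≤ s) :
    0 ≤ a * (log s - log a) := by
  rcases ha.eq_or_lt with rfl | ha
  · simp
  · exact mul_nonneg ha.le (sub_nonneg.2 (log_le_log ha has))

lemma mul_log_sub_log_eq_zero_iff {a s : ℝ} (ha : 0 ≤ a) (has : a ≤ s) :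
    a * (log s - log a) = 0 ↔ a = 0 ∨ a = s := by
  rcases ha.eq_or_lt with rfl | ha
  · simp
  · have hlog : log s = log a ↔ a = s :=
      ⟨fun h => log_injOn_pos ha (ha.trans_le has) h.symm, fun h => h ▸ rfl⟩
    simp [ha.ne', sub_eq_zero, hlog]

lemma support_subsingleton_iff_forall_eq_zero_or_eq_sum {a : ι → ℝ} (ha : ∀ i, 0 ≤ a i) :
    (support a).Subsingleton ↔ ∀ i, a i = 0 ∨ a i = ∑ j, a j := by
  refine ⟨fun h i => or_iff_not_imp_left.2 fun hi => ?_, fun h i hi j hj => ?_⟩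
  · exact (Fintype.sum_eq_single i fun j hj => by_contra fun hj' => hj (h hj' hi)).symm
  · by_contra hij
    have hlt : a i < ∑ k, a k := single_lt_sum (Ne.symm hij) (mem_univ i) (mem_univ j)
      ((ha j).lt_of_ne (Ne.symm hj)) fun k _ _ => ha k
    exact hlt.ne ((h i).resolve_left hi)

variable {a : ι → ℝ}

lemma negMulLog_sum_le_sum_negMulLog (ha : ∀ i, 0 ≤ a i) :
    negMulLog (∑ i, a i) ≤ ∑ i, negMulLog (a i) := by
  rw [← sub_nonneg, sum_negMulLog_sub_negMulLog_sum]
  exact sum_nonneg fun i _ =>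
    mul_log_sub_log_nonneg (ha i) (single_le_sum (fun j _ => ha j) (mem_univ i))

lemma sum_negMulLog_eq_negMulLog_sum_iff (ha : ∀ i, 0 ≤ a i) :
    ∑ i, negMulLog (a i) = negMulLog (∑ i, a i) ↔ (support a).Subsingleton := by
  have hle (i : ι) : a i ≤ ∑ j, a j := single_le_sum (fun j _ => ha j) (mem_univ i)
  rw [← sub_eq_zero, sum_negMulLog_sub_negMulLog_sum,
    Fintype.sum_eq_zero_iff_of_nonneg fun i => mul_log_sub_log_nonneg (ha i) (hle i),
    support_subsingleton_iff_forall_eq_zero_or_eq_sum ha, funext_iff]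
  exact forall_congr' fun i => mul_log_sub_log_eq_zero_iff (ha i) (hle i)

end NegMulLog

namespace IsDist

variable {X : Type*} [Fintype X] {p : X → ℝ}

lemma nonempty (hp : IsDist p) : Nonempty X := by
  by_contra h
  simpa [not_nonempty_iff.1 h] using hp.2

lemma le_one (hp : IsDist p) (x : X) : p x ≤ 1 :=
  hp.2 ▸ single_le_sum (fun y _ => hp.1 y) (mem_univ x)

lemma eq_of_apply_eq_one (hp : IsDist p) {x x' : X} (hx : p x = 1) (hx' : p x' = 1) :
    x = x' := by
  by_contra hxx'
  have hlt : p x < ∑ y, p y := single_lt_sum (Ne.symm hxx') (mem_univ x) (mem_univ x')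
    (by rw [hx']; exact one_pos) fun y _ _ => hp.1 y
  rw [hx, hp.2] at hlt
  exact hlt.false

lemma eq_one_of_sum_mul_eq_one (hp : IsDist p) {v : X → ℝ} (hv : ∀ x, v x ≤ 1)
    (h : ∑ x, v x * p x = 1) {x : X} (hx : p x ≠ 0) : v x = 1 := by
  have hsum : ∑ y, (1 - v y) * p y = 0 := by
    simp only [sub_mul, one_mul, sum_sub_distrib, hp.2, h, sub_self]
  have hx0 := (Fintype.sum_eq_zero_iff_of_nonneg fun y =>
    mul_nonneg (sub_nonneg.2 (hv y)) (hp.1 y)).1 hsum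
  have := congrFun hx0 x
  simp only [Pi.zero_apply, mul_eq_zero, sub_eq_zero, hx, or_false] at this
  exact this.symm

end IsDist

section InformationLoss

variable {X Y : Type*} [Fintype X] [Fintype Y] {p : X → ℝ} {f : X → Y → ℝ} {q : Y → ℝ}

lemma entropy_add_condEntropy_eq_sum_negMulLog (hf : ∀ x, ∑ y, f x y = 1) :
    entropy p + ∑ x, p x * entropy (f x) = ∑ y, ∑ x, negMulLog (f x y * p x) := by
  simp only [entropy, sum_comm (γ := Y), negMulLog_mul, sum_add_distrib, ← mul_sum, ← sum_mul,
    hf, one_mul, add_comm]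

lemma entropy_sub_entropy_add_condEntropy_eq_sum (hf : ∀ x, ∑ y, f x y = 1)
    (hq : ∀ y, q y = ∑ x, f x y * p x) :
    entropy p - entropy q + ∑ x, p x * entropy (f x) =
      ∑ y, (∑ x, negMulLog (f x y * p x) - negMulLog (∑ x, f x y * p x)) := by
  rw [sub_add_eq_add_sub, entropy_add_condEntropy_eq_sum_negMulLog hf, sum_sub_distrib, entropy]
  simp only [hq]

lemma entropy_sub_entropy_add_condEntropy_eq_zero_iff (hp : ∀ x, 0 ≤ p x)
    (hf : ∀ x, IsDist (f x)) (hq : ∀ y, q y = ∑ x, f x y * p x) :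
    entropy p - entropy q + ∑ x, p x * entropy (f x) = 0 ↔
      ∀ y, (support fun x => f x y * p x).Subsingleton := by
  have hjoint (y : Y) (x : X) : 0 ≤ f x y * p x := mul_nonneg ((hf x).1 y) (hp x)
  rw [entropy_sub_entropy_add_condEntropy_eq_sum (fun x => (hf x).2) hq,
    Fintype.sum_eq_zero_iff_of_nonneg fun y => sub_nonneg.2
      (negMulLog_sum_le_sum_negMulLog (hjoint y)), funext_iff]
  exact forall_congr' fun y => sub_eq_zero.trans (sum_negMulLog_eq_negMulLog_sum_iff (hjoint y))

end InformationLoss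

section BayesianInverse

variable {X Y : Type*} {p : X → ℝ} {f : X → Y → ℝ} {q : Y → ℝ}

/-- Off the support of `q` the Bayesian inverse is arbitrary; we take the point mass at `x₀`. -/
noncomputable def bayesInverse (p : X → ℝ) (f : X → Y → ℝ) (q : Y → ℝ) (x₀ : X) (y : Y)
    (x : X) : ℝ :=
  if q y = 0 then (if x = x₀ then 1 else 0) else f x y * p x / q y

variable [Fintype X]

lemma bayesInverse_mul_eq (hp : ∀ x, 0 ≤ p x) (hf : ∀ x y, 0 ≤ f x y)
    (hq : ∀ y, q y = ∑ x, f x y * p x) (x₀ : X) (y : Y) (x : X) :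
    bayesInverse p f q x₀ y x * q y = f x y * p x := by
  by_cases hy : q y = 0
  · have hjoint := (Fintype.sum_eq_zero_iff_of_nonneg fun x => mul_nonneg (hf x y) (hp x)).1
      ((hq y).symm.trans hy)
    simp [hy, congrFun hjoint x]
  · simp [bayesInverse, hy]

lemma isDist_bayesInverse (hp : ∀ x, 0 ≤ p x) (hf : ∀ x y, 0 ≤ f x y)
    (hq : ∀ y, q y = ∑ x, f x y * p x) (x₀ : X) (y : Y) :
    IsDist (bayesInverse p f q x₀ y) := by
  unfold bayesInverse
  by_cases hy : q y = 0
  · refine ⟨fun x => ?_, by simp [hy]⟩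
    simp only [hy, if_true]; split_ifs <;> norm_num
  · have hq0 : 0 ≤ q y := hq y ▸ sum_nonneg fun x _ => mul_nonneg (hf x y) (hp x)
    refine ⟨fun x => ?_, ?_⟩
    · simp only [hy, if_false]; exact div_nonneg (mul_nonneg (hf x y) (hp x)) hq0
    · simp only [hy, if_false, ← sum_div, ← hq y, div_self hy]

lemma sum_bayesInverse_mul_eq [Fintype Y] (hp : ∀ x, 0 ≤ p x) (hf : ∀ x, IsDist (f x))
    (hq : ∀ y, q y = ∑ x, f x y * p x) (x₀ x : X) :
    ∑ y, bayesInverse p f q x₀ y x * q y = p x := by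
  simp only [bayesInverse_mul_eq hp (fun x => (hf x).1) hq, ← sum_mul, (hf x).2, one_mul]

lemma bayesInverse_apply_of_support_subsingleton (hq : ∀ y, q y = ∑ x, f x y * p x) {y : Y}
    (hy : (support fun x => f x y * p x).Subsingleton) {x : X} (hx : f x y * p x ≠ 0)
    (x₀ x' : X) : bayesInverse p f q x₀ y x' = if x' = x then 1 else 0 := by
  have hqy : q y = f x y * p x :=
    (hq y).trans (Fintype.sum_eq_single x fun z hz => by_contra fun h => hz (hy h hx))
  by_cases hx' : x' = x
  · simp [bayesInverse, hx', hqy, hx]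
  · have hx'0 : f x' y * p x' = 0 := by_contra fun h => hx' (hy h hx)
    simp [bayesInverse, hx', hqy, hx, hx'0]

lemma sum_bayesInverse_mul_eq_ite [Fintype Y] (hq : ∀ y, q y = ∑ x, f x y * p x)
    (hsupp : ∀ y, (support fun x => f x y * p x).Subsingleton) (hf : ∀ x, ∑ y, f x y = 1)
    {x : X} (hx : p x ≠ 0) (x₀ x' : X) :
    ∑ y, bayesInverse p f q x₀ y x' * f x y = if x' = x then 1 else 0 := by
  have hterm (y : Y) : bayesInverse p f q x₀ y x' * f x y = (if x' = x then 1 else 0) * f x y := by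
    by_cases hxy : f x y = 0
    · simp [hxy]
    · rw [bayesInverse_apply_of_support_subsingleton hq (hsupp y) (mul_ne_zero hxy hx)]
  simp only [hterm, ← mul_sum, hf, mul_one]

end BayesianInverse

lemma support_subsingleton_of_sum_mul_eq_ite {X Y : Type*} [Fintype X] [Fintype Y]
    {p : X → ℝ} {f : X → Y → ℝ} {g : Y → X → ℝ} (hp : ∀ x, 0 ≤ p x) (hf : ∀ x, IsDist (f x))
    (hg : ∀ y, IsDist (g y))
    (hgf : ∀ x x', 0 < p x → ∑ y, g y x' * f x y = if x' = x then 1 else 0) (y : Y) :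
    (support fun x => f x y * p x).Subsingleton := by
  have hg1 {x : X} (hx : f x y * p x ≠ 0) : g y x = 1 :=
    (hf x).eq_one_of_sum_mul_eq_one (fun y' => (hg y').le_one x)
      (by simpa using hgf x x ((hp x).lt_of_ne (Ne.symm (right_ne_zero_of_mul hx))))
      (left_ne_zero_of_mul hx)
  exact fun x hx x' hx' => (hg y).eq_of_apply_eq_one (hg1 hx) (hg1 hx')

theorem K_zero_iff_disintegration
    {X Y : Type*} [Fintype X] [Fintype Y]
    (p : X → ℝ) (f : X → Y → ℝ) (q : Y → ℝ)
    (hp : IsDist p) (hf : ∀ x, IsDist (f x))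
    (hq : ∀ y, q y = ∑ x, f x y * p x) :
    entropy p - entropy q + (∑ x, p x * entropy (f x)) = 0 ↔
    ∃ g : Y → X → ℝ, (∀ y, IsDist (g y)) ∧
      (∀ x', p x' = ∑ y, g y x' * q y) ∧
      (∀ x x', 0 < p x →
        (∑ y, g y x' * f x y) = if x' = x then (1:ℝ) else 0) := by
  rw [entropy_sub_entropy_add_condEntropy_eq_zero_iff hp.1 hf hq]
  constructor
  · intro hsupp
    obtain ⟨x₀⟩ := hp.nonempty
    exact ⟨bayesInverse p f q x₀, isDist_bayesInverse hp.1 (fun x => (hf x).1) hq x₀,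
      fun x => (sum_bayesInverse_mul_eq hp.1 hf hq x₀ x).symm,
      fun x x' hx => sum_bayesInverse_mul_eq_ite hq hsupp (fun x => (hf x).2) hx.ne' x₀ x'⟩
  · rintro ⟨g, hg, -, hgf⟩
    exact support_subsingleton_of_sum_mul_eq_ite hp.1 hf hg hgf
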